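/- arXiv:math/9803085 — 5 statements merged into one kernel-verified Lean document; each statement's English description precedes it below -/
import Mathlib

section
/- Let R be a graded F-algebra and d > 0. Every morphism of deformations of R, i.e. every morphism over the identity of R between two d-dimensional deformations (R̃1, t1, j1) and (R̃2, t2, j2) of R, is bijective, and hence is an isomorphism of deformations of R. -/
/-- A finite-dimensional graded-commutative ℤ-graded `F`-algebra
("graded F-algebra" in the sense of Seidel's paper). -/
structure GradedFAlg (F : Type) [Field F] where
  carrier : Type
  [ring : Ring carrier]
  [alg : Algebra F carrier]
  grading : ℤ → Submodule F carrier
  [gradedAlgebra : GradedAlgebra grading]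
  [findim : FiniteDimensional F carrier]
  gcomm : ∀ (i j : ℤ) (x y : carrier), x ∈ grading i → y ∈ grading j →
    x * y = ((-1 : F) ^ (i * j)) • (y * x)

attribute [instance] GradedFAlg.ring GradedFAlg.alg GradedFAlg.gradedAlgebra GradedFAlg.findim

variable {F : Type} [Field F]

/-- A homomorphism of graded `F`-algebras. -/
structure GradedFAlg.Hom (A B : GradedFAlg F) where
  toAlgHom : A.carrier →ₐ[F] B.carrier
  graded : ∀ (i : ℤ) (x : A.carrier), x ∈ A.grading i → toAlgHom x ∈ B.grading i

/-- The identity homomorphism of graded `F`-algebras. -/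
def GradedFAlg.Hom.id (A : GradedFAlg F) : GradedFAlg.Hom A A :=
  ⟨AlgHom.id F A.carrier, fun _ _ h => h⟩

/-- A `d`-dimensional (first order infinitesimal) deformation `(R̃, t, j)` of `A`:
`t ∈ R̃^d` with `t² = 0` whose annihilator is exactly `t·R̃`, and `j : R̃ → A`
a surjective homomorphism of graded algebras with kernel `t·R̃`. -/
structure Deformation (F : Type) [Field F] (A : GradedFAlg F) (d : ℤ) where
  alg : GradedFAlg F
  t : alg.carrier
  t_mem : t ∈ alg.grading d
  t_sq : t * t = 0
  t_ann : ∀ x : alg.carrier, t * x = 0 ↔ ∃ y : alg.carrier, x = t * y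
  j : GradedFAlg.Hom alg A
  j_surj : Function.Surjective j.toAlgHom
  j_ker : ∀ x : alg.carrier, j.toAlgHom x = 0 ↔ ∃ y : alg.carrier, x = t * y

/-- A morphism of deformations over a homomorphism `f` of graded `F`-algebras. -/
structure DefMorphismOver {A B : GradedFAlg F} (f : GradedFAlg.Hom A B) {d : ℤ}
    (D1 : Deformation F A d) (D2 : Deformation F B d) where
  toHom : GradedFAlg.Hom D1.alg D2.alg
  map_t : toHom.toAlgHom D1.t = D2.t
  over' : ∀ x, D2.j.toAlgHom (toHom.toAlgHom x) = f.toAlgHom (D1.j.toAlgHom x)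

/-- Two deformations of `A` are isomorphic if there is a bijective morphism of
deformations (i.e. a morphism over the identity of `A`) between them. -/
def Deformation.Iso {A : GradedFAlg F} {d : ℤ} (D1 D2 : Deformation F A d) : Prop :=
  ∃ φ : DefMorphismOver (GradedFAlg.Hom.id A) D1 D2, Function.Bijective φ.toHom.toAlgHom

/- Let `φ` be a morphism of deformations over an injective `f`. If `φ x = 0` then `j₁ x = 0`, so
`x = t₁ y`; then `t₂ φ y = 0`, so `φ y ∈ t₂ R̃₂ = ker j₂`, hence `j₁ y = 0` and `y = t₁ z`, giving
`x = t₁² z = 0`. Injectivity upgrades to bijectivity by counting dimensions: since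
`ker t = t R̃ = ker j` and `j` is onto, rank–nullity for `t·` and for `j` gives `dim R̃ = 2 dim R`. -/

namespace Deformation

variable {A : GradedFAlg F} {d : ℤ} (D : Deformation F A d)

theorem ker_mulLeft_t :
    LinearMap.ker (LinearMap.mulLeft F D.t) = LinearMap.range (LinearMap.mulLeft F D.t) := by
  ext x
  simp only [LinearMap.mem_ker, LinearMap.mem_range, LinearMap.mulLeft_apply, D.t_ann x, eq_comm]

theorem ker_j :
    LinearMap.ker D.j.toAlgHom.toLinearMap = LinearMap.range (LinearMap.mulLeft F D.t) := by
  ext x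
  simp only [LinearMap.mem_ker, LinearMap.mem_range, LinearMap.mulLeft_apply,
    AlgHom.toLinearMap_apply, D.j_ker x, eq_comm]

theorem finrank_eq_two_mul :
    Module.finrank F D.alg.carrier = 2 * Module.finrank F A.carrier := by
  have hmul := LinearMap.finrank_range_add_finrank_ker (LinearMap.mulLeft F D.t)
  have hj := LinearMap.finrank_range_add_finrank_ker D.j.toAlgHom.toLinearMap
  rw [D.ker_mulLeft_t] at hmul
  rw [D.ker_j, LinearMap.range_eq_top.mpr D.j_surj, finrank_top] at hj
  omega

end Deformation

namespace DefMorphismOver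

variable {A B : GradedFAlg F} {f : GradedFAlg.Hom A B} {d : ℤ}
  {D1 : Deformation F A d} {D2 : Deformation F B d} (φ : DefMorphismOver f D1 D2)

theorem injective (hf : Function.Injective f.toAlgHom) :
    Function.Injective φ.toHom.toAlgHom := by
  have j_eq_zero {x : D1.alg.carrier} (hx : D2.j.toAlgHom (φ.toHom.toAlgHom x) = 0) :
      D1.j.toAlgHom x = 0 :=
    hf (by rw [← φ.over', hx, map_zero])
  rw [injective_iff_map_eq_zero]
  intro x hx
  obtain ⟨y, rfl⟩ := (D1.j_ker x).mp (j_eq_zero (by rw [hx, map_zero]))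
  have hty : D2.t * φ.toHom.toAlgHom y = 0 := by rw [← φ.map_t, ← map_mul, hx]
  have hjy : D2.j.toAlgHom (φ.toHom.toAlgHom y) = 0 :=
    (D2.j_ker _).mpr ((D2.t_ann _).mp hty)
  obtain ⟨z, rfl⟩ := (D1.j_ker y).mp (j_eq_zero hjy)
  rw [← mul_assoc, D1.t_sq, zero_mul]

theorem bijective (hf : Function.Bijective f.toAlgHom) :
    Function.Bijective φ.toHom.toAlgHom := by
  have hdim : Module.finrank F D1.alg.carrier = Module.finrank F D2.alg.carrier := by
    rw [D1.finrank_eq_two_mul, D2.finrank_eq_two_mul,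
      (LinearEquiv.ofBijective f.toAlgHom.toLinearMap hf).finrank_eq]
  have hinj : Function.Injective φ.toHom.toAlgHom.toLinearMap := φ.injective hf.injective
  exact ⟨hinj, (LinearMap.injective_iff_surjective_of_finrank_eq_finrank hdim).mp hinj⟩

end DefMorphismOver

theorem every_morphism_of_deformations_is_iso_general
    {F : Type} [Field F] (R : GradedFAlg F) (d : ℤ)
    (D1 D2 : Deformation F R d) (φ : DefMorphismOver (GradedFAlg.Hom.id R) D1 D2) :
    Function.Bijective φ.toHom.toAlgHom :=
  φ.bijective Function.bijective_id

/-- Every morphism of deformations of a graded `F`-algebra `R`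
(i.e. every morphism over the identity of `R` between two `d`-dimensional
deformations of `R`) is bijective, hence an isomorphism of deformations. -/
theorem every_morphism_of_deformations_is_iso
    {F : Type} [Field F] (R : GradedFAlg F) (d : ℤ) (hd : 0 < d)
    (D1 D2 : Deformation F R d) (φ : DefMorphismOver (GradedFAlg.Hom.id R) D1 D2) :
    Function.Bijective φ.toHom.toAlgHom :=
  every_morphism_of_deformations_is_iso_general R d D1 D2 φ
end

section
/- Let R be a graded F-algebra concentrated in even degrees (R^i = 0 for all odd i) and let d > 0 be odd. Then every d-dimensional deformation of R is isomorphic, as a deformation of R, to the trivial deformation (R̃_0, ε, j) obtained from ψ = 0 (so R̃_0 = R[ε]/ε² with the untwisted product). In other words, Def_d(R) = 0 for odd d. -/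
variable {F : Type} [Field F]

/-- `ψ ∈ Z_d(R)`: an `F`-bilinear map `R × R → R` of degree `-d`, graded
symmetric, satisfying the cocycle identity
`(-1)^{d·deg x}·x·ψ(y,z) - ψ(xy,z) + ψ(x,yz) - ψ(x,y)·z = 0`. -/
structure IsCocycle (R : GradedFAlg F) (d : ℤ)
    (ψ : R.carrier →ₗ[F] R.carrier →ₗ[F] R.carrier) : Prop where
  deg : ∀ (i j : ℤ) (x y : R.carrier), x ∈ R.grading i → y ∈ R.grading j →
    ψ x y ∈ R.grading (i + j - d)
  symm : ∀ (i j : ℤ) (x y : R.carrier), x ∈ R.grading i → y ∈ R.grading j →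
    ψ x y = ((-1 : F) ^ (i * j)) • ψ y x
  cocycle : ∀ (i : ℤ) (x y z : R.carrier), x ∈ R.grading i →
    ((-1 : F) ^ (d * i)) • (x * ψ y z) - ψ (x * y) z + ψ x (y * z) - ψ x y * z = 0

/-- The deformation `D` "is" the twisted algebra `R̃_ψ = R ⊕ R·ε`:
there is an `F`-linear identification `e` of `D.alg` with `R × R` under which
multiplication becomes the twisted product
`(x₀ + x₁ε)(y₀ + y₁ε) = x₀y₀ + ((-1)^{d·deg x₀} x₀y₁ + x₁y₀ + ψ(x₀,y₀))ε`
(the sign operator `σ` being `σ x = (-1)^{d·deg x}·x` on homogeneous elements),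
`t` becomes `ε`, `j` becomes the projection to the first factor, and the grading
of `D.alg` is the evident grading of `R ⊕ R·ε` with `deg ε = d`. -/
def IsTwistedModel (R : GradedFAlg F) (d : ℤ) (σ : R.carrier →ₗ[F] R.carrier)
    (ψ : R.carrier →ₗ[F] R.carrier →ₗ[F] R.carrier) (D : Deformation F R d) : Prop :=
  ∃ e : D.alg.carrier ≃ₗ[F] R.carrier × R.carrier,
    (∀ x y : D.alg.carrier, e (x * y) =
      ((e x).1 * (e y).1, σ (e x).1 * (e y).2 + (e x).2 * (e y).1 + ψ (e x).1 (e y).1)) ∧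
    e 1 = (1, 0) ∧
    e D.t = (0, 1) ∧
    (∀ x, D.j.toAlgHom x = (e x).1) ∧
    (∀ (i : ℤ) (x : D.alg.carrier), x ∈ D.alg.grading i ↔
      (e x).1 ∈ R.grading i ∧ (e x).2 ∈ R.grading (i - d))

/-!
Choose a degree-preserving linear section `S` of `j`. Since the annihilator of `t` is
`t R̃ = ker j`, the map `(a, b) ↦ S a + t S b` identifies `R × R` with `R̃` as graded vector
spaces. The degree-`m` part of `ker j` is `t` times a copy of `R^{m-d}`, so when `R` lives in
even degrees and `d` is odd, `ker j` has no even-degree part. The defects `S x * S y - S (x y)`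
and `S 1 - 1` of homogeneous elements are even-degree elements of `ker j`, hence vanish: `S` is
an algebra map. As `S x` has even degree, graded commutativity makes it commute with `t`, and the
sign `(-1)^{d·deg x}` is always `1`.
-/

namespace GradedFAlg

def Hom.toGradedRingHom {A B : GradedFAlg F} (f : Hom A B) : A.grading →+*ᵍ B.grading :=
  ⟨f.toAlgHom.toRingHom, fun hx => f.graded _ _ hx⟩

lemma Hom.map_decompose {A B : GradedFAlg F} (f : Hom A B) (x : A.carrier) (i : ℤ) :
    f.toAlgHom (DirectSum.decompose A.grading x i) =
      DirectSum.decompose B.grading (f.toAlgHom x) i :=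
  map_directSumDecompose A.grading B.grading f.toGradedRingHom

lemma Hom.exists_linear_graded_section {A B : GradedFAlg F} (f : Hom A B)
    (hf : Function.Surjective f.toAlgHom) :
    ∃ S : B.carrier →ₗ[F] A.carrier, (∀ y, f.toAlgHom (S y) = y) ∧
      ∀ i y, y ∈ B.grading i → S y ∈ A.grading i := by
  let fᵢ : ∀ i, A.grading i →ₗ[F] B.grading i := fun i =>
    (f.toAlgHom.toLinearMap ∘ₗ (A.grading i).subtype).codRestrict _ fun x => f.graded i x x.2
  have hfᵢ : ∀ i, Function.Surjective (fᵢ i) := by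
    rintro i ⟨y, hy⟩
    obtain ⟨x, rfl⟩ := hf y
    exact ⟨DirectSum.decompose A.grading x i, Subtype.ext <|
      (f.map_decompose x i).trans (DirectSum.decompose_of_mem_same _ hy)⟩
  choose gᵢ hgᵢ using fun i => (fᵢ i).exists_rightInverse_of_surjective
    (LinearMap.range_eq_top.mpr (hfᵢ i))
  let S : B.carrier →ₗ[F] A.carrier := (DirectSum.decomposeLinearEquiv A.grading).symm.toLinearMap
    ∘ₗ DirectSum.lmap gᵢ ∘ₗ (DirectSum.decomposeLinearEquiv B.grading).toLinearMap
  have hS : ∀ i (y : B.grading i), S y = gᵢ i y := fun i y => by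
    simp [S, DirectSum.decomposeLinearEquiv_apply, DirectSum.decompose_coe,
      ← DirectSum.lof_eq_of F]
  refine ⟨S, fun y => ?_, fun i y hy => hS i ⟨y, hy⟩ ▸ (gᵢ i _).2⟩
  suffices f.toAlgHom.toLinearMap ∘ₗ S = LinearMap.id from LinearMap.congr_fun this y
  refine DirectSum.decompose_lhom_ext B.grading fun i => LinearMap.ext fun y => ?_
  simp only [LinearMap.comp_apply, Submodule.subtype_apply, hS, LinearMap.id_comp]
  exact congrArg Subtype.val (LinearMap.congr_fun (hgᵢ i) y)

section Even

variable {R : GradedFAlg F}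

lemma exists_even_of_mem (heven : ∀ i : ℤ, Odd i → R.grading i = ⊥) {i : ℤ} {x : R.carrier}
    (hx : x ∈ R.grading i) : ∃ k, Even k ∧ x ∈ R.grading k := by
  rcases Int.even_or_odd i with hi | hi
  · exact ⟨i, hi, hx⟩
  · rw [heven i hi, Submodule.mem_bot] at hx
    exact ⟨0, Even.zero, hx ▸ zero_mem _⟩

@[elab_as_elim]
lemma induction_on_even (heven : ∀ i : ℤ, Odd i → R.grading i = ⊥) {motive : R.carrier → Prop}
    (homogeneous : ∀ i x, Even i → x ∈ R.grading i → motive x)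
    (add : ∀ x y, motive x → motive y → motive (x + y)) (x : R.carrier) : motive x := by
  induction x using DirectSum.Decomposition.inductionOn R.grading with
  | zero => exact homogeneous 0 0 Even.zero (zero_mem _)
  | homogeneous x =>
    obtain ⟨k, hk, hx⟩ := exists_even_of_mem heven x.2
    exact homogeneous k x hk hx
  | add x y hx hy => exact add x y hx hy

lemma signOperator_eq_id (heven : ∀ i : ℤ, Odd i → R.grading i = ⊥) {d : ℤ}
    {σ : R.carrier →ₗ[F] R.carrier}
    (hσ : ∀ (i : ℤ) (x : R.carrier), x ∈ R.grading i → σ x = ((-1 : F) ^ (d * i)) • x) :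
    σ = LinearMap.id := by
  ext x
  induction x using induction_on_even heven with
  | homogeneous i x hi hx =>
    rw [hσ i x hx, (hi.mul_left d).neg_one_zpow, one_smul, LinearMap.id_apply]
  | add x y hx hy => rw [map_add, map_add, hx, hy]

end Even

end GradedFAlg

namespace Deformation

variable {R : GradedFAlg F} {d : ℤ} (D : Deformation F R d)

lemma j_t_mul (w : D.alg.carrier) : D.j.toAlgHom (D.t * w) = 0 :=
  (D.j_ker _).mpr ⟨w, rfl⟩

lemma t_mul_eq_zero_iff (w : D.alg.carrier) : D.t * w = 0 ↔ D.j.toAlgHom w = 0 :=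
  (D.t_ann w).trans (D.j_ker w).symm

lemma t_mul_eq_t_mul_iff (w w' : D.alg.carrier) :
    D.t * w = D.t * w' ↔ D.j.toAlgHom w = D.j.toAlgHom w' := by
  rw [← sub_eq_zero, ← mul_sub, t_mul_eq_zero_iff, map_sub, sub_eq_zero]

lemma exists_mem_grading_of_j_eq_zero {m : ℤ} {v : D.alg.carrier} (hv : v ∈ D.alg.grading m)
    (hjv : D.j.toAlgHom v = 0) : ∃ w ∈ D.alg.grading (m - d), v = D.t * w := by
  obtain ⟨w, rfl⟩ := (D.j_ker v).mp hjv
  refine ⟨DirectSum.decompose D.alg.grading w (m - d), SetLike.coe_mem _, ?_⟩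
  have key := DirectSum.coe_decompose_mul_add_of_left_mem (𝒜 := D.alg.grading) (b := w)
    (j := m - d) D.t_mem
  rwa [add_sub_cancel, DirectSum.decompose_of_mem_same _ hv] at key

lemma eq_of_j_eq {m : ℤ} (hR : R.grading (m - d) = ⊥) {v v' : D.alg.carrier}
    (hv : v ∈ D.alg.grading m) (hv' : v' ∈ D.alg.grading m)
    (h : D.j.toAlgHom v = D.j.toAlgHom v') : v = v' := by
  obtain ⟨w, hw, hvw⟩ := D.exists_mem_grading_of_j_eq_zero (sub_mem hv hv')
    (by rw [map_sub, h, sub_self])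
  have hjw : D.j.toAlgHom w = 0 := by simpa [hR] using D.j.graded _ w hw
  rw [← sub_eq_zero, hvw, D.t_mul_eq_zero_iff, hjw]

def sectionSum (S : R.carrier →ₗ[F] D.alg.carrier) : R.carrier × R.carrier →ₗ[F] D.alg.carrier :=
  S.coprod (LinearMap.mulLeft F D.t ∘ₗ S)

lemma sectionSum_apply (S : R.carrier →ₗ[F] D.alg.carrier) (p : R.carrier × R.carrier) :
    D.sectionSum S p = S p.1 + D.t * S p.2 := rfl

section GradedSection

variable {S : R.carrier →ₗ[F] D.alg.carrier} (hS : ∀ x, D.j.toAlgHom (S x) = x)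
include hS

lemma t_mul_eq_t_mul_section (w : D.alg.carrier) : D.t * w = D.t * S (D.j.toAlgHom w) :=
  (D.t_mul_eq_t_mul_iff _ _).mpr (hS _).symm

lemma j_sectionSum (p : R.carrier × R.carrier) : D.j.toAlgHom (D.sectionSum S p) = p.1 := by
  rw [sectionSum_apply, map_add, hS, j_t_mul, add_zero]

lemma bijective_sectionSum : Function.Bijective (D.sectionSum S) := by
  refine ⟨(injective_iff_map_eq_zero _).mpr fun p hp => ?_, fun v => ?_⟩
  · have h₁ : p.1 = 0 := by rw [← D.j_sectionSum hS p, hp, map_zero]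
    rw [sectionSum_apply, h₁, map_zero, zero_add, t_mul_eq_zero_iff, hS] at hp
    exact Prod.ext h₁ hp
  · obtain ⟨w, hw⟩ := (D.j_ker (v - S (D.j.toAlgHom v))).mp (by rw [map_sub, hS, sub_self])
    refine ⟨(D.j.toAlgHom v, D.j.toAlgHom w), ?_⟩
    rw [sectionSum_apply, ← D.t_mul_eq_t_mul_section hS, ← hw, add_sub_cancel]

lemma sectionSum_mem_grading_iff
    (hS_mem : ∀ i x, x ∈ R.grading i → S x ∈ D.alg.grading i) (i : ℤ)
    (p : R.carrier × R.carrier) :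
    D.sectionSum S p ∈ D.alg.grading i ↔ p.1 ∈ R.grading i ∧ p.2 ∈ R.grading (i - d) := by
  constructor
  · intro hp
    have h₁ : p.1 ∈ R.grading i := D.j_sectionSum hS p ▸ D.j.graded i _ hp
    refine ⟨h₁, ?_⟩
    obtain ⟨w, hw, hpw⟩ := D.exists_mem_grading_of_j_eq_zero (v := D.t * S p.2)
      (by simpa [sectionSum_apply] using sub_mem hp (hS_mem i _ h₁)) (D.j_t_mul _)
    rw [t_mul_eq_t_mul_iff, hS] at hpw
    exact hpw ▸ D.j.graded _ w hw
  · rintro ⟨h₁, h₂⟩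
    refine add_mem (hS_mem i _ h₁) ?_
    simpa using SetLike.mul_mem_graded D.t_mem (hS_mem _ _ h₂)

end GradedSection

lemma sectionSum_mul (S : R.carrier →ₐ[F] D.alg.carrier) (hS_t : ∀ x, Commute (S x) D.t)
    (p q : R.carrier × R.carrier) :
    D.sectionSum S.toLinearMap p * D.sectionSum S.toLinearMap q =
      D.sectionSum S.toLinearMap (p.1 * q.1, p.1 * q.2 + p.2 * q.1) := by
  have hS_t' : ∀ x y, S x * (D.t * S y) = D.t * S (x * y) := fun x y => by
    rw [← mul_assoc, (hS_t x).eq, mul_assoc, map_mul]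
  simp only [sectionSum_apply, AlgHom.toLinearMap_apply, add_mul, mul_add, map_add, ← map_mul,
    hS_t', mul_assoc D.t]
  rw [← mul_assoc, D.t_sq, zero_mul, add_zero]
  abel

lemma isTwistedModel_zero_of_algHom_section (S : R.carrier →ₐ[F] D.alg.carrier)
    (hS : ∀ x, D.j.toAlgHom (S x) = x) (hS_mem : ∀ i x, x ∈ R.grading i → S x ∈ D.alg.grading i)
    (hS_t : ∀ x, Commute (S x) D.t) : IsTwistedModel R d LinearMap.id 0 D := by
  let e := LinearEquiv.ofBijective _ (D.bijective_sectionSum (S := S.toLinearMap) hS)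
  refine ⟨e.symm, fun x y => ?_, ?_, ?_, fun x => ?_, fun i x => ?_⟩
  · obtain ⟨p, rfl⟩ := e.surjective x
    obtain ⟨q, rfl⟩ := e.surjective y
    rw [e.symm_apply_eq]
    simp [e, sectionSum_mul D S hS_t]
  · rw [e.symm_apply_eq]; simp [e, sectionSum_apply]
  · rw [e.symm_apply_eq]; simp [e, sectionSum_apply]
  · obtain ⟨p, rfl⟩ := e.surjective x
    simp [e, D.j_sectionSum (S := S.toLinearMap) hS]
  · obtain ⟨p, rfl⟩ := e.surjective x
    simpa [e] using D.sectionSum_mem_grading_iff hS hS_mem i p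

section Even

variable (heven : ∀ i : ℤ, Odd i → R.grading i = ⊥) (hodd : Odd d)
  {S : R.carrier →ₗ[F] D.alg.carrier} (hS : ∀ x, D.j.toAlgHom (S x) = x)
  (hS_mem : ∀ i x, x ∈ R.grading i → S x ∈ D.alg.grading i)
include heven hodd hS hS_mem

lemma section_one : S 1 = 1 :=
  D.eq_of_j_eq (heven _ (Even.zero.sub_odd hodd)) (hS_mem 0 1 SetLike.GradedOne.one_mem)
    SetLike.GradedOne.one_mem (by rw [hS, map_one])

lemma section_mul (x y : R.carrier) : S (x * y) = S x * S y := by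
  induction x using GradedFAlg.induction_on_even heven with
  | add x x' hx hx' => rw [add_mul, map_add, map_add, hx, hx', add_mul]
  | homogeneous i x hi hx =>
    induction y using GradedFAlg.induction_on_even heven with
    | add y y' hy hy' => rw [mul_add, map_add, map_add, hy, hy', mul_add]
    | homogeneous k y hk hy =>
      exact D.eq_of_j_eq (heven _ ((hi.add hk).sub_odd hodd))
        (hS_mem _ _ (SetLike.mul_mem_graded hx hy))
        (SetLike.mul_mem_graded (hS_mem i x hx) (hS_mem k y hy)) (by rw [hS, map_mul, hS, hS])

omit hodd hS in
lemma commute_section_t (x : R.carrier) : Commute (S x) D.t := by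
  induction x using GradedFAlg.induction_on_even heven with
  | add x x' hx hx' => exact map_add S x x' ▸ hx.add_left hx'
  | homogeneous i x hi hx =>
    rw [Commute, SemiconjBy, D.alg.gcomm i d _ _ (hS_mem i x hx) D.t_mem,
      (hi.mul_right d).neg_one_zpow, one_smul]

end Even

end Deformation

theorem odd_dimensional_deformations_trivial_general
    {F : Type} [Field F] (R : GradedFAlg F)
    (heven : ∀ i : ℤ, Odd i → R.grading i = ⊥)
    (d : ℤ) (hodd : Odd d)
    (σ : R.carrier →ₗ[F] R.carrier)
    (hσ : ∀ (i : ℤ) (x : R.carrier), x ∈ R.grading i → σ x = ((-1 : F) ^ (d * i)) • x)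
    (D : Deformation F R d) :
    IsTwistedModel R d σ (0 : R.carrier →ₗ[F] R.carrier →ₗ[F] R.carrier) D := by
  obtain ⟨S, hS, hS_mem⟩ := D.j.exists_linear_graded_section D.j_surj
  obtain rfl := GradedFAlg.signOperator_eq_id heven hσ
  let S' : R.carrier →ₐ[F] D.alg.carrier := AlgHom.ofLinearMap S
    (D.section_one heven hodd hS hS_mem) (D.section_mul heven hodd hS hS_mem)
  exact D.isTwistedModel_zero_of_algHom_section S' hS hS_mem (D.commute_section_t heven hS_mem)

/-- If `R` is a graded `F`-algebra concentrated in even degrees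
and `d > 0` is odd, then every `d`-dimensional deformation of `R` is isomorphic,
as a deformation of `R`, to the trivial deformation `(R̃_0, ε, j)` (i.e.
`R[ε]/ε²` with the untwisted product, which is `R̃_ψ` for `ψ = 0`).
In other words `Def_d(R) = 0` for odd `d`. -/
theorem odd_dimensional_deformations_trivial
    {F : Type} [Field F] (R : GradedFAlg F)
    (heven : ∀ i : ℤ, Odd i → R.grading i = ⊥)
    (d : ℤ) (hd : 0 < d) (hodd : Odd d)
    (σ : R.carrier →ₗ[F] R.carrier)
    (hσ : ∀ (i : ℤ) (x : R.carrier), x ∈ R.grading i → σ x = ((-1 : F) ^ (d * i)) • x)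
    (D : Deformation F R d) :
    IsTwistedModel R d σ (0 : R.carrier →ₗ[F] R.carrier →ₗ[F] R.carrier) D :=
  odd_dimensional_deformations_trivial_general R heven d hodd σ hσ D
end

section
/- Let n ≥ 1 and let d be an even integer with 2 ≤ d ≤ 2n+2. Every d-dimensional deformation of R = F[u]/(u^{n+1}) is isomorphic, as a deformation of R, to (R̃_α, t, j) for some α ∈ F. -/
variable {F : Type} [Field F]

/-- `R` is (a model of) the cohomology `F[u]/(u^{n+1})` of `ℂPⁿ`: `u` has
degree `2`, `u^{n+1} = 0`, and `1, u, …, uⁿ` is an `F`-basis of `R`. -/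
structure IsCPnAlg (R : GradedFAlg F) (u : R.carrier) (n : ℕ) : Prop where
  u_mem : u ∈ R.grading 2
  u_pow : u ^ (n + 1) = 0
  basis : ∃ b : Module.Basis (Fin (n + 1)) F R.carrier, ∀ i : Fin (n + 1), b i = u ^ (i : ℕ)

/-- The deformation `D` of `R = F[u]/(u^{n+1})` "is" the deformation
`R̃_α = F[ũ, t]/(ũ^{n+1} + α·t·ũ^{n+1-d/2}, t²)` with `j(ũ) = u`, `j(t) = 0`:
it contains an element `ũ` of degree `2` lifting `u` and satisfying the defining
relation. (These data determine `R̃_α` up to isomorphism of deformations.) -/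
structure IsRAlphaDef (R : GradedFAlg F) (u : R.carrier) (n : ℕ) (d : ℤ) (α : F)
    (D : Deformation F R d) (ut : D.alg.carrier) : Prop where
  mem : ut ∈ D.alg.grading 2
  j_u : D.j.toAlgHom ut = u
  rel : ut ^ (n + 1) + α • (D.t * ut ^ ((n : ℤ) + 1 - d / 2).toNat) = 0

/-! Lift `u` to a homogeneous `ũ` of degree `2`. Then `ũ^(n+1)` lies in `ker j = t·R̃`, and
comparing degrees it equals `t·y` with `y` homogeneous of degree `2n+2-d`. That component of
`R` is spanned by `u^k`, `k = n+1-d/2`, so `j y = c·u^k`; as `t` kills `ker j = t·R̃`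
(because `t² = 0`), `t·y = c·t·ũ^k`, which is the defining relation of `R̃_α` for `α = -c`. -/

open DirectSum

theorem Graded.exists_mem_map_eq_of_surjective {ι A B σ τ G : Type*}
    [DecidableEq ι] [AddMonoid ι] [Semiring A] [Semiring B] [SetLike σ A] [SetLike τ B]
    [AddSubmonoidClass σ A] [AddSubmonoidClass τ B] {𝒜 : ι → σ} {ℬ : ι → τ}
    [GradedRing 𝒜] [GradedRing ℬ] [FunLike G A B] [GradedFunLike G 𝒜 ℬ] [RingHomClass G A B]
    (f : G) (hf : Function.Surjective f) {i : ι} {b : B} (hb : b ∈ ℬ i) :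
    ∃ a ∈ 𝒜 i, f a = b := by
  obtain ⟨x, rfl⟩ := hf b
  exact ⟨decompose 𝒜 x i, SetLike.coe_mem _,
    by rw [map_directSumDecompose 𝒜 ℬ, decompose_of_mem_same ℬ hb]⟩

theorem DirectSum.exists_mem_mul_eq_mul_of_mem {ι A σ : Type*}
    [DecidableEq ι] [AddLeftCancelMonoid ι] [Semiring A] [SetLike σ A] [AddSubmonoidClass σ A]
    {𝒜 : ι → σ} [GradedRing 𝒜]
    {i j : ι} {a b : A} (ha : a ∈ 𝒜 i) (hab : a * b ∈ 𝒜 (i + j)) :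
    ∃ b' ∈ 𝒜 j, a * b' = a * b :=
  ⟨decompose 𝒜 b j, SetLike.coe_mem _,
    by rw [← coe_decompose_mul_add_of_left_mem 𝒜 ha, decompose_of_mem_same 𝒜 hab]⟩

theorem GradedFAlg.pow_mem_grading_two_mul (A : GradedFAlg F) {x : A.carrier}
    (hx : x ∈ A.grading 2) (m : ℕ) : x ^ m ∈ A.grading (2 * m) := by
  simpa [mul_comm] using SetLike.pow_mem_graded m hx

def GradedFAlg.Hom.toGradedRingHom_s7 {A B : GradedFAlg F} (f : GradedFAlg.Hom A B) :
    A.grading →+*ᵍ B.grading where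
  __ := f.toAlgHom.toRingHom
  map_mem hx := f.graded _ _ hx

namespace Deformation

variable {A : GradedFAlg F} {d : ℤ} (D : Deformation F A d)

theorem exists_mem_grading_j_eq {i : ℤ} {a : A.carrier} (ha : a ∈ A.grading i) :
    ∃ x ∈ D.alg.grading i, D.j.toAlgHom x = a :=
  Graded.exists_mem_map_eq_of_surjective D.j.toGradedRingHom_s7 D.j_surj ha

theorem exists_mem_grading_t_mul_eq {m : ℤ} {x : D.alg.carrier}
    (hx : x ∈ D.alg.grading (d + m)) (hjx : D.j.toAlgHom x = 0) :
    ∃ y ∈ D.alg.grading m, D.t * y = x := by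
  obtain ⟨y, rfl⟩ := (D.j_ker x).mp hjx
  exact exists_mem_mul_eq_mul_of_mem D.t_mem hx

theorem t_mul_eq_of_j_eq {x y : D.alg.carrier} (h : D.j.toAlgHom x = D.j.toAlgHom y) :
    D.t * x = D.t * y := by
  obtain ⟨z, hz⟩ := (D.j_ker (x - y)).mp (by rw [map_sub, h, sub_self])
  rw [← sub_eq_zero, ← mul_sub, hz, ← mul_assoc, D.t_sq, zero_mul]

end Deformation

theorem IsCPnAlg.exists_eq_smul_pow {R : GradedFAlg F} {u : R.carrier} {n : ℕ}
    (hR : IsCPnAlg R u n) {k : ℕ} (hk : k ≤ n) {v : R.carrier}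
    (hv : v ∈ R.grading (2 * k)) : ∃ c : F, v = c • u ^ k := by
  obtain ⟨b, hb⟩ := hR.basis
  have hmem (i : Fin (n + 1)) : b.repr v i • u ^ (i : ℕ) ∈ R.grading (2 * (i : ℕ)) :=
    Submodule.smul_mem _ _ (R.pow_mem_grading_two_mul hR.u_mem i)
  refine ⟨b.repr v ⟨k, by omega⟩, ?_⟩
  calc v = decompose R.grading v (2 * k) := (decompose_of_mem_same _ hv).symm
    _ = ∑ i, (decompose R.grading (b.repr v i • u ^ (i : ℕ)) (2 * k) : R.carrier) := by
      conv_lhs => rw [← b.sum_repr v]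
      simp only [hb, decompose_sum, DirectSum.sum_apply, AddSubmonoidClass.coe_finsetSum]
    _ = b.repr v ⟨k, by omega⟩ • u ^ k := by
      rw [Finset.sum_eq_single_of_mem ⟨k, by omega⟩ (Finset.mem_univ _)]
      · exact decompose_of_mem_same _ (hmem ⟨k, by omega⟩)
      · intro i _ hik
        exact decompose_of_mem_ne _ (hmem i) (fun h => hik (Fin.ext (by simp at h; omega)))

theorem every_deformation_of_CPn_is_Ralpha_general
    {F : Type} [Field F] (R : GradedFAlg F) (u : R.carrier) (n : ℕ)
    (hR : IsCPnAlg R u n)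
    (d : ℤ) (heven : Even d) (hd2 : 2 ≤ d) (hd : d ≤ 2 * (n : ℤ) + 2)
    (D : Deformation F R d) :
    ∃ (α : F) (ut : D.alg.carrier), IsRAlphaDef R u n d α D ut := by
  obtain ⟨e, rfl⟩ := heven
  obtain ⟨k, hk⟩ : ∃ k : ℕ, (k : ℤ) = n + 1 - e := ⟨(n + 1 - e).toNat, by omega⟩
  obtain ⟨ut, hut, hjut⟩ := D.exists_mem_grading_j_eq hR.u_mem
  have hpow : ut ^ (n + 1) ∈ D.alg.grading (e + e + 2 * k) := by
    convert D.alg.pow_mem_grading_two_mul hut (n + 1) using 2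
    push_cast
    omega
  obtain ⟨y, hy, hty⟩ := D.exists_mem_grading_t_mul_eq hpow (by rw [map_pow, hjut, hR.u_pow])
  obtain ⟨c, hc⟩ := hR.exists_eq_smul_pow (by omega) (D.j.graded _ y hy)
  have hrel : ut ^ (n + 1) = c • (D.t * ut ^ k) := by
    rw [← hty, ← mul_smul_comm]
    exact D.t_mul_eq_of_j_eq (by rw [hc, map_smul, map_pow, hjut])
  refine ⟨-c, ut, hut, hjut, ?_⟩
  rw [show ((n : ℤ) + 1 - (e + e) / 2).toNat = k by omega, hrel, neg_smul, add_neg_cancel]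

/-- Let `R = F[u]/(u^{n+1})` with `deg u = 2`, `n ≥ 1`, and let
`d` be even with `2 ≤ d ≤ 2n+2`. Every `d`-dimensional deformation of `R` is
isomorphic, as a deformation of `R`, to `(R̃_α, t, j)` for some `α ∈ F`;
equivalently, every deformation of `R` is itself a model of some `R̃_α`. -/
theorem every_deformation_of_CPn_is_Ralpha
    {F : Type} [Field F] (R : GradedFAlg F) (u : R.carrier) (n : ℕ) (hn : 1 ≤ n)
    (hR : IsCPnAlg R u n)
    (d : ℤ) (heven : Even d) (hd2 : 2 ≤ d) (hd : d ≤ 2 * (n : ℤ) + 2)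
    (D : Deformation F R d) :
    ∃ (α : F) (ut : D.alg.carrier), IsRAlphaDef R u n d α D ut :=
  every_deformation_of_CPn_is_Ralpha_general R u n hR d heven hd2 hd D
end

section
/- Let n ≥ 1 and d = 2. For α, β ∈ F, the deformations (R̃_α, t, j) and (R̃_β, t, j) of R = F[u]/(u^{n+1}) are isomorphic as deformations of R if and only if β − α = γ·(n+1) for some γ ∈ F (i.e. β − α lies in the image of multiplication by n+1 on F; in particular, if n+1 is invertible in F then all R̃_α are isomorphic, and if the characteristic of F divides n+1 then R̃_α ≅ R̃_β only for α = β). -/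
variable {F : Type} [Field F]

/-!
Lifting the basis `1, u, …, uⁿ` of `R` along `j` gives the basis `ũⁱ, t ũⁱ` (`i ≤ n`) of
`R̃_α`, on which the multiplication is determined by `n` and `α` alone; so two deformations
with the same parameter are isomorphic. An isomorphism `R̃_α → R̃_β` sends `ũ` to a degree `2`
lift of `u`, i.e. to some `ũ + γ t`. Since `t² = 0`,
`(ũ + γ t)ⁿ⁺¹ = ũⁿ⁺¹ + (n + 1) γ t ũⁿ`, so this substitution turns the relation with parameter
`β` into the one with parameter `β - (n + 1) γ`; as `t ũⁿ ≠ 0`, the parameter is read off.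
-/

open Submodule Set

section SquareZero

variable {A : Type*} [Ring A] {x s : A}

theorem add_pow_succ_of_mul_self_eq_zero (hc : Commute s x) (hs : s * s = 0) (m : ℕ) :
    (x + s) ^ (m + 1) = x ^ (m + 1) + (m + 1) • (s * x ^ m) := by
  induction m with
  | zero => simp
  | succ m ih =>
    have hsxs : s * x ^ m * s = 0 := by
      rw [mul_assoc, ← (hc.pow_right m).eq, ← mul_assoc, hs, zero_mul]
    rw [pow_succ (x + s), ih, add_mul, mul_add, mul_add, smul_mul_assoc, smul_mul_assoc, hsxs,
      smul_zero, add_zero, mul_assoc s, ← pow_succ x m, ← pow_succ x (m + 1),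
      ← (hc.pow_right (m + 1)).eq]
    simp only [add_nsmul, one_nsmul]
    abel

theorem mul_add_pow_of_mul_eq_zero {t : A} (hc : Commute t x) (hts : t * s = 0) (m : ℕ) :
    t * (x + s) ^ m = t * x ^ m := by
  induction m with
  | zero => simp
  | succ m ih =>
    rw [pow_succ, ← mul_assoc, ih, mul_add, mul_assoc t (x ^ m) x, ← pow_succ,
      (hc.pow_right m).eq, mul_assoc, hts, mul_zero, add_zero]

end SquareZero

section HomogeneousSpan

variable {S M N ι κ : Type*} [Semiring S] [AddCommMonoid M] [Module S M] [AddCommMonoid N]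
  [Module S N] [DecidableEq ι] (𝒜 : ι → Submodule S M) [DirectSum.Decomposition 𝒜]
  {v : κ → M} {deg : κ → ι}

theorem DirectSum.Decomposition.mem_span_image_of_mem (hv : span S (range v) = ⊤)
    (hdeg : ∀ k, v k ∈ 𝒜 (deg k)) {i : ι} {x : M} (hx : x ∈ 𝒜 i) :
    x ∈ span S (v '' {k | deg k = i}) := by
  rw [← DirectSum.decompose_of_mem_same 𝒜 hx]
  have hxspan : x ∈ span S (range v) := hv ▸ mem_top
  clear hx
  induction hxspan using Submodule.span_induction with
  | mem y hy =>
    obtain ⟨k, rfl⟩ := hy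
    by_cases hk : deg k = i
    · subst hk
      rw [DirectSum.decompose_of_mem_same 𝒜 (hdeg k)]
      exact subset_span ⟨k, rfl, rfl⟩
    · rw [DirectSum.decompose_of_mem_ne 𝒜 (hdeg k) hk]
      exact zero_mem _
  | zero => simp
  | add y z _ _ hy hz => simpa using add_mem hy hz
  | smul c y _ hy =>
    rw [DirectSum.decompose_smul, DirectSum.smul_apply, coe_smul]
    exact smul_mem _ c hy

theorem LinearMap.map_mem_of_span_homogeneous (hv : span S (Set.range v) = ⊤)
    (hdeg : ∀ k, v k ∈ 𝒜 (deg k)) (L : M →ₗ[S] N) (ℬ : ι → Submodule S N)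
    (hL : ∀ k, L (v k) ∈ ℬ (deg k)) {i : ι} {x : M} (hx : x ∈ 𝒜 i) : L x ∈ ℬ i := by
  have hmap :=
    mem_map_of_mem (f := L) (DirectSum.Decomposition.mem_span_image_of_mem 𝒜 hv hdeg hx)
  rw [map_span] at hmap
  refine span_le.2 ?_ hmap
  rintro _ ⟨_, ⟨k, rfl, rfl⟩, rfl⟩
  exact hL k

end HomogeneousSpan

theorem LinearMap.map_mul_of_span_eq_top {S A B κ : Type*} [CommSemiring S] [Semiring A]
    [Algebra S A] [Semiring B] [Algebra S B] {v : κ → A} (hv : span S (Set.range v) = ⊤)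
    (L : A →ₗ[S] B) (h : ∀ k l, L (v k * v l) = L (v k) * L (v l)) (x y : A) :
    L (x * y) = L x * L y := by
  have hbilin : (LinearMap.mul S A).compr₂ L = (LinearMap.mul S B).compl₁₂ L L :=
    ext_on_range hv fun k => ext_on_range hv fun l => h k l
  exact LinearMap.congr_fun (LinearMap.congr_fun hbilin x) y

theorem GradedFAlg.commute_of_mem_two (A : GradedFAlg F) {x y : A.carrier} {j : ℤ}
    (hx : x ∈ A.grading 2) (hy : y ∈ A.grading j) : Commute x y := by
  rw [Commute, SemiconjBy, A.gcomm 2 j x y hx hy, Even.neg_one_zpow ⟨j, by ring⟩, one_smul]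

namespace Deformation

variable {A : GradedFAlg F} {d : ℤ} (D : Deformation F A d)

theorem j_t_s10 : D.j.toAlgHom D.t = 0 := (D.j_ker _).2 ⟨1, (mul_one _).symm⟩

theorem t_pow_eq_zero {a : ℕ} (ha : 2 ≤ a) : D.t ^ a = 0 :=
  pow_eq_zero_of_le ha (by rw [sq, D.t_sq])

section LiftBasis

variable {ι : Type*} [Fintype ι] (b : Module.Basis ι F A.carrier) {e : ι → D.alg.carrier}
  (he : ∀ i, D.j.toAlgHom (e i) = b i)
include he

theorem linearIndependent_sumElim_lift :
    LinearIndependent F (Sum.elim e fun i => D.t * e i) := by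
  have hj : ∀ c : ι → F, D.j.toAlgHom (∑ i, c i • e i) = ∑ i, c i • b i := by simp [he]
  have hb := Fintype.linearIndependent_iff.1 b.linearIndependent
  rw [Fintype.linearIndependent_iff]
  intro g hg
  simp only [Fintype.sum_sum_type, Sum.elim_inl, Sum.elim_inr] at hg
  have hl : ∀ i, g (.inl i) = 0 := hb _ <| by
    simpa [hj, D.j_t_s10] using congrArg D.j.toAlgHom hg
  have hr : ∀ i, g (.inr i) = 0 := by
    have ht : D.t * ∑ i, g (.inr i) • e i = 0 := by
      simpa [hl, Finset.mul_sum] using hg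
    obtain ⟨y, hy⟩ := (D.t_ann _).1 ht
    exact hb _ <| by rw [← hj, hy, map_mul, D.j_t_s10, zero_mul]
  rintro (i | i)
  exacts [hl i, hr i]

theorem exists_eq_sum_add_t_mul (x : D.alg.carrier) :
    ∃ (c : ι → F) (y : D.alg.carrier), x = ∑ i, c i • e i + D.t * y := by
  obtain ⟨y, hy⟩ := (D.j_ker (x - ∑ i, b.repr (D.j.toAlgHom x) i • e i)).1
    (by simp [he, b.sum_repr])
  exact ⟨_, y, by rw [← hy]; abel⟩

theorem span_sumElim_lift_eq_top : span F (range (Sum.elim e fun i => D.t * e i)) = ⊤ := by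
  refine eq_top_iff.2 fun x _ => ?_
  obtain ⟨c, y, rfl⟩ := D.exists_eq_sum_add_t_mul b he x
  obtain ⟨c', z, rfl⟩ := D.exists_eq_sum_add_t_mul b he y
  rw [mul_add, ← mul_assoc, D.t_sq, zero_mul, add_zero, Finset.mul_sum]
  refine add_mem (sum_mem fun i _ => smul_mem _ _ (subset_span ⟨.inl i, rfl⟩))
    (sum_mem fun i _ => ?_)
  rw [mul_smul_comm]
  exact smul_mem _ _ (subset_span ⟨.inr i, rfl⟩)

noncomputable def liftBasis : Module.Basis (ι ⊕ ι) F D.alg.carrier :=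
  .mk (D.linearIndependent_sumElim_lift b he) (D.span_sumElim_lift_eq_top b he).ge

@[simp]
theorem liftBasis_inl (i : ι) : D.liftBasis b he (.inl i) = e i :=
  Module.Basis.mk_apply _ _ _

@[simp]
theorem liftBasis_inr (i : ι) : D.liftBasis b he (.inr i) = D.t * e i :=
  Module.Basis.mk_apply _ _ _

end LiftBasis

end Deformation

namespace IsRAlphaDef

variable {R : GradedFAlg F} {u : R.carrier} {n : ℕ} {α : F} {D : Deformation F R 2}
  {ut : D.alg.carrier}

theorem _root_.isRAlphaDef_two_iff : IsRAlphaDef R u n 2 α D ut ↔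
    ut ∈ D.alg.grading 2 ∧ D.j.toAlgHom ut = u ∧ ut ^ (n + 1) + α • (D.t * ut ^ n) = 0 := by
  have hexp : ((n : ℤ) + 1 - 2 / 2).toNat = n := by omega
  exact ⟨fun h => ⟨h.mem, h.j_u, by simpa only [hexp] using h.rel⟩,
    fun ⟨hmem, hj, hrel⟩ => ⟨hmem, hj, by rwa [hexp]⟩⟩

theorem pow_succ_eq (h : IsRAlphaDef R u n 2 α D ut) : ut ^ (n + 1) = -(α • (D.t * ut ^ n)) :=
  eq_neg_of_add_eq_zero_left (isRAlphaDef_two_iff.1 h).2.2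

theorem commute_t (h : IsRAlphaDef R u n 2 α D ut) : Commute D.t ut :=
  D.alg.commute_of_mem_two D.t_mem h.mem

theorem t_mul_pow_eq_zero (h : IsRAlphaDef R u n 2 α D ut) {m : ℕ} (hm : n + 1 ≤ m) :
    D.t * ut ^ m = 0 := by
  obtain ⟨k, rfl⟩ := Nat.exists_eq_add_of_le hm
  rw [pow_add, ← mul_assoc, h.pow_succ_eq, mul_neg, mul_smul_comm, ← mul_assoc, D.t_sq,
    zero_mul, smul_zero, neg_zero, zero_mul]

theorem pow_eq_zero (h : IsRAlphaDef R u n 2 α D ut) {m : ℕ} (hm : n + 2 ≤ m) : ut ^ m = 0 := by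
  obtain ⟨k, rfl⟩ := Nat.exists_eq_add_of_le hm
  rw [pow_add, pow_succ, h.pow_succ_eq, neg_mul, smul_mul_assoc, mul_assoc, ← pow_succ,
    h.t_mul_pow_eq_zero le_rfl, smul_zero, neg_zero, zero_mul]

theorem t_pow_mul_pow_mul (h : IsRAlphaDef R u n 2 α D ut) (a m b k : ℕ) :
    D.t ^ a * ut ^ m * (D.t ^ b * ut ^ k) = D.t ^ (a + b) * ut ^ (m + k) := by
  rw [(h.commute_t.pow_pow b m).symm.mul_mul_mul_comm, pow_add, pow_add]

theorem t_pow_mul_pow_mem (h : IsRAlphaDef R u n 2 α D ut) (a m : ℕ) :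
    D.t ^ a * ut ^ m ∈ D.alg.grading (a • 2 + m • 2) :=
  SetLike.mul_mem_graded (SetLike.pow_mem_graded a D.t_mem) (SetLike.pow_mem_graded m h.mem)

theorem j_t_pow_mul_pow (h : IsRAlphaDef R u n 2 α D ut) (a m : ℕ) :
    D.j.toAlgHom (D.t ^ a * ut ^ m) = 0 ^ a * u ^ m := by
  rw [map_mul, map_pow, map_pow, D.j_t_s10, h.j_u]

theorem j_pow_eq_basis (h : IsRAlphaDef R u n 2 α D ut)
    {b : Module.Basis (Fin (n + 1)) F R.carrier} (hb : ∀ i : Fin (n + 1), b i = u ^ (i : ℕ))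
    (i : Fin (n + 1)) : D.j.toAlgHom (ut ^ (i : ℕ)) = b i := by
  rw [map_pow, h.j_u, hb]

theorem span_t_pow_mul_pow_eq_top (h : IsRAlphaDef R u n 2 α D ut)
    {b : Module.Basis (Fin (n + 1)) F R.carrier} (hb : ∀ i : Fin (n + 1), b i = u ^ (i : ℕ)) :
    span F (range fun p : ℕ × ℕ => D.t ^ p.1 * ut ^ p.2) = ⊤ := by
  refine eq_top_iff.2 ((D.span_sumElim_lift_eq_top b (h.j_pow_eq_basis hb)).ge.trans
    (span_mono ?_))
  rintro _ ⟨i | i, rfl⟩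
  exacts [⟨(0, i), by simp⟩, ⟨(1, i), by simp⟩]

theorem t_mul_pow_ne_zero {d : ℤ} {D : Deformation F R d} {ut : D.alg.carrier}
    (hR : IsCPnAlg R u n) (h : IsRAlphaDef R u n d α D ut) : D.t * ut ^ n ≠ 0 := by
  obtain ⟨b, hb⟩ := hR.basis
  intro h0
  obtain ⟨y, hy⟩ := (D.t_ann _).1 h0
  apply b.ne_zero (Fin.last n)
  rw [hb, Fin.val_last, ← h.j_u, ← map_pow, hy, map_mul, D.j_t_s10, zero_mul]

end IsRAlphaDef

section SameParameter

variable {R : GradedFAlg F} {u : R.carrier} {n : ℕ} {α : F} {D1 D2 : Deformation F R 2}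
  {ut1 : D1.alg.carrier} {ut2 : D2.alg.carrier}

theorem liftBasis_equiv_t_pow_mul_pow (h1 : IsRAlphaDef R u n 2 α D1 ut1)
    (h2 : IsRAlphaDef R u n 2 α D2 ut2) {b : Module.Basis (Fin (n + 1)) F R.carrier}
    (hb : ∀ i : Fin (n + 1), b i = u ^ (i : ℕ)) (a m : ℕ) :
    (D1.liftBasis b (h1.j_pow_eq_basis hb)).equiv (D2.liftBasis b (h2.j_pow_eq_basis hb))
      (Equiv.refl _) (D1.t ^ a * ut1 ^ m) = D2.t ^ a * ut2 ^ m := by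
  set L := (D1.liftBasis b (h1.j_pow_eq_basis hb)).equiv
    (D2.liftBasis b (h2.j_pow_eq_basis hb)) (Equiv.refl _)
  have hL : ∀ k, L (D1.liftBasis b (h1.j_pow_eq_basis hb) k) =
      D2.liftBasis b (h2.j_pow_eq_basis hb) k := fun k => by simp [L]
  have ht : ∀ m, L (D1.t * ut1 ^ m) = D2.t * ut2 ^ m := by
    intro m
    rcases lt_or_ge m (n + 1) with hm | hm
    · simpa using hL (.inr ⟨m, hm⟩)
    · rw [h1.t_mul_pow_eq_zero hm, h2.t_mul_pow_eq_zero hm, map_zero]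
  have hu : ∀ m, L (ut1 ^ m) = ut2 ^ m := by
    intro m
    obtain hm | rfl | hm : m < n + 1 ∨ m = n + 1 ∨ n + 2 ≤ m := by omega
    · simpa using hL (.inl ⟨m, hm⟩)
    · rw [h1.pow_succ_eq, map_neg, map_smul, ht, ← h2.pow_succ_eq]
    · rw [h1.pow_eq_zero hm, h2.pow_eq_zero hm, map_zero]
  match a with
  | 0 => simpa using hu m
  | 1 => simpa using ht m
  | a + 2 => rw [D1.t_pow_eq_zero le_add_self, D2.t_pow_eq_zero le_add_self, zero_mul, zero_mul,
      map_zero]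

theorem Deformation.iso_of_isRAlphaDef (hR : IsCPnAlg R u n)
    (h1 : IsRAlphaDef R u n 2 α D1 ut1) (h2 : IsRAlphaDef R u n 2 α D2 ut2) : D1.Iso D2 := by
  obtain ⟨b, hb⟩ := hR.basis
  set L := (D1.liftBasis b (h1.j_pow_eq_basis hb)).equiv
    (D2.liftBasis b (h2.j_pow_eq_basis hb)) (Equiv.refl _)
  have hL : ∀ a m, L (D1.t ^ a * ut1 ^ m) = D2.t ^ a * ut2 ^ m :=
    liftBasis_equiv_t_pow_mul_pow h1 h2 hb
  have hspan := h1.span_t_pow_mul_pow_eq_top hb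
  let φ : D1.alg.carrier →ₐ[F] D2.alg.carrier := AlgHom.ofLinearMap L.toLinearMap
    (by simpa using hL 0 0)
    (L.toLinearMap.map_mul_of_span_eq_top hspan fun p q => by
      simp only [LinearEquiv.coe_coe, h1.t_pow_mul_pow_mul, h2.t_pow_mul_pow_mul, hL])
  have hgraded (k : ℤ) (x : D1.alg.carrier) (hx : x ∈ D1.alg.grading k) :
      φ x ∈ D2.alg.grading k :=
    L.toLinearMap.map_mem_of_span_homogeneous D1.alg.grading hspan
      (fun p => h1.t_pow_mul_pow_mem p.1 p.2) D2.alg.grading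
      (fun p => by simpa [hL] using h2.t_pow_mul_pow_mem p.1 p.2) hx
  have hover : D2.j.toAlgHom.toLinearMap ∘ₗ L.toLinearMap = D1.j.toAlgHom.toLinearMap :=
    LinearMap.ext_on_range hspan fun p => by
      simp [hL, h1.j_t_pow_mul_pow, h2.j_t_pow_mul_pow]
  exact ⟨⟨⟨φ, hgraded⟩, by simpa [φ] using hL 1 0, fun x => LinearMap.congr_fun hover x⟩,
    L.bijective⟩

end SameParameter

namespace IsRAlphaDef

variable {R : GradedFAlg F} {u : R.carrier} {n : ℕ} {α β : F}

theorem map {d : ℤ} {D1 D2 : Deformation F R d} {ut : D1.alg.carrier}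
    (h : IsRAlphaDef R u n d α D1 ut) (φ : DefMorphismOver (GradedFAlg.Hom.id R) D1 D2) :
    IsRAlphaDef R u n d α D2 (φ.toHom.toAlgHom ut) where
  mem := φ.toHom.graded 2 ut h.mem
  j_u := (φ.over' ut).trans h.j_u
  rel := by simpa [φ.map_t] using congrArg φ.toHom.toAlgHom h.rel

variable {D : Deformation F R 2} {ut : D.alg.carrier}

theorem exists_eq_add_smul_t (hR : IsCPnAlg R u n) (hn : 1 ≤ n)
    (h : IsRAlphaDef R u n 2 β D ut) {w : D.alg.carrier} (hw : w ∈ D.alg.grading 2)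
    (hwu : D.j.toAlgHom w = u) : ∃ c : F, w = ut + c • D.t := by
  obtain ⟨b, hb⟩ := hR.basis
  have hw' : w ∈ span F {ut, D.t} := by
    refine span_mono ?_ (DirectSum.Decomposition.mem_span_image_of_mem D.alg.grading
      (h.span_t_pow_mul_pow_eq_top hb) (fun p => h.t_pow_mul_pow_mem p.1 p.2) hw)
    rintro _ ⟨⟨a, m⟩, hdeg, rfl⟩
    obtain ⟨rfl, rfl⟩ | ⟨rfl, rfl⟩ : a = 0 ∧ m = 1 ∨ a = 1 ∧ m = 0 := by
      simp only [mem_ofPred_eq, nsmul_eq_mul] at hdeg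
      omega
    all_goals simp
  obtain ⟨a, c, rfl⟩ := mem_span_pair.1 hw'
  have hu : u ≠ 0 := by simpa [hb] using b.ne_zero ⟨1, by omega⟩
  have ha : (a - 1) • u = 0 := by
    simpa [h.j_u, D.j_t_s10, sub_smul, sub_eq_zero] using hwu
  rw [sub_eq_zero.1 ((smul_eq_zero.1 ha).resolve_right hu), one_smul]
  exact ⟨c, rfl⟩

theorem add_smul_t_iff (hR : IsCPnAlg R u n) (h : IsRAlphaDef R u n 2 β D ut) (c α : F) :
    IsRAlphaDef R u n 2 α D (ut + c • D.t) ↔ β - α = c * ((n : F) + 1) := by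
  have hct : Commute (c • D.t) ut := h.commute_t.smul_left c
  have hrel : (ut + c • D.t) ^ (n + 1) + α • (D.t * (ut + c • D.t) ^ n) =
      (α - β + c * (n + 1)) • (D.t * ut ^ n) := by
    rw [add_pow_succ_of_mul_self_eq_zero hct (by rw [smul_mul_smul_comm, D.t_sq, smul_zero]),
      mul_add_pow_of_mul_eq_zero h.commute_t (by rw [mul_smul_comm, D.t_sq, smul_zero]),
      h.pow_succ_eq, smul_mul_assoc, ← Nat.cast_smul_eq_nsmul F]
    module
  rw [isRAlphaDef_two_iff, hrel, smul_eq_zero, or_iff_left (h.t_mul_pow_ne_zero hR)]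
  simp only [add_mem h.mem (smul_mem _ c D.t_mem), map_add, map_smul, h.j_u, D.j_t_s10, smul_zero,
    add_zero, true_and]
  constructor <;> intro hc <;> linear_combination -hc

end IsRAlphaDef

/-- Let `R = F[u]/(u^{n+1})` with `deg u = 2`, `n ≥ 1`, and
`d = 2`. For `α, β ∈ F`, the deformations `(R̃_α, t, j)` and `(R̃_β, t, j)` of
`R` are isomorphic as deformations of `R` if and only if `β − α = γ·(n+1)` for
some `γ ∈ F`. -/
theorem Ralpha_iso_Rbeta_d_two
    {F : Type} [Field F] (R : GradedFAlg F) (u : R.carrier) (n : ℕ) (hn : 1 ≤ n)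
    (hR : IsCPnAlg R u n) (α β : F)
    (D1 D2 : Deformation F R 2) (ut1 : D1.alg.carrier) (ut2 : D2.alg.carrier)
    (h1 : IsRAlphaDef R u n 2 α D1 ut1) (h2 : IsRAlphaDef R u n 2 β D2 ut2) :
    Deformation.Iso D1 D2 ↔ ∃ γ : F, β - α = γ * ((n : F) + 1) := by
  constructor
  · rintro ⟨φ, -⟩
    have hφ := h1.map φ
    obtain ⟨γ, hγ⟩ := h2.exists_eq_add_smul_t hR hn hφ.mem hφ.j_u
    exact ⟨γ, (h2.add_smul_t_iff hR γ α).1 (hγ ▸ hφ)⟩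
  · rintro ⟨γ, hγ⟩
    exact Deformation.iso_of_isRAlphaDef hR h1 ((h2.add_smul_t_iff hR γ α).2 hγ)
end

section
/- Let R be a graded F-algebra, ℓ : R² → F an F-linear map, N > 0, and ψ : R × R → R a graded symmetric F-bilinear map of degree −2N satisfying properties (1), (2) and (3) (with respect to ℓ). If (R̃1, t1, j1) and (R̃2, t2, j2) are d-dimensional deformations of R each of which admits an extension of ψ, then their sum also admits an extension of ψ. (In particular, the subset Def_d(R, ψ) ⊆ Def_d(R) of isomorphism classes of deformations admitting an extension of ψ is closed under the sum of deformations.) -/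
variable {F : Type} [Field F]

theorem Deformation.j_t {A : GradedFAlg F} {d : ℤ} (D : Deformation F A d) :
    D.j.toAlgHom D.t = 0 := (D.j_ker D.t).mpr ⟨1, (mul_one D.t).symm⟩

/-- The subalgebra `Δ ⊆ R̃₁ × R̃₂` of pairs `(x₁, x₂)` with `j₁ x₁ = j₂ x₂`. -/
def sumSubalg {A : GradedFAlg F} {d : ℤ} (D1 D2 : Deformation F A d) :
    Subalgebra F (D1.alg.carrier × D2.alg.carrier) :=
  AlgHom.equalizer (D1.j.toAlgHom.comp (AlgHom.fst F D1.alg.carrier D2.alg.carrier))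
    (D2.j.toAlgHom.comp (AlgHom.snd F D1.alg.carrier D2.alg.carrier))

/-- The element `(t₁, 0)` of `Δ`. -/
def sumT1 {A : GradedFAlg F} {d : ℤ} (D1 D2 : Deformation F A d) : sumSubalg D1 D2 :=
  ⟨(D1.t, 0), by show _ = _; simp [Deformation.j_t]⟩

/-- The element `(0, t₂)` of `Δ`. -/
def sumT2 {A : GradedFAlg F} {d : ℤ} (D1 D2 : Deformation F A d) : sumSubalg D1 D2 :=
  ⟨(0, D2.t), by show _ = _; simp [Deformation.j_t]⟩

/-- The element `(t₁, -t₂)` of `Δ`. -/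
def sumTT {A : GradedFAlg F} {d : ℤ} (D1 D2 : Deformation F A d) : sumSubalg D1 D2 :=
  ⟨(D1.t, -D2.t), by show _ = _; simp [Deformation.j_t]⟩

/-- `D` realizes the sum of the deformations `D1` and `D2`: there is a surjective
algebra homomorphism `π : Δ → D.alg`, compatible with the gradings, with kernel
`(t₁, -t₂)·Δ`, sending the class of `(t₁,0)` and of `(0,t₂)` to `t`, and lying
over `j₁` (equivalently `j₂`). -/
def IsSumOf {A : GradedFAlg F} {d : ℤ} (D1 D2 D : Deformation F A d) : Prop :=
  ∃ π : ↥(sumSubalg D1 D2) →ₐ[F] D.alg.carrier,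
    Function.Surjective π ∧
    (∀ (i : ℤ) (z : sumSubalg D1 D2), z.val.1 ∈ D1.alg.grading i →
      z.val.2 ∈ D2.alg.grading i → π z ∈ D.alg.grading i) ∧
    π (sumT1 D1 D2) = D.t ∧
    π (sumT2 D1 D2) = D.t ∧
    (∀ z, π z = 0 ↔ ∃ w, z = sumTT D1 D2 * w) ∧
    (∀ z : sumSubalg D1 D2, D.j.toAlgHom (π z) = D1.j.toAlgHom z.val.1)

/-- An extension of `ψ` to a deformation `(R̃, t, j)` of `R` (Definition 4.2 of
the paper, with the divisor condition expressed via a linear functional `ℓ` on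
degree-two classes): a graded symmetric bilinear map `ψ̃` of degree `−2N` with
(1') the associativity identity, (2') `ψ̃(1,·) = ψ̃(t,·) = 0`,
(3') `ψ̃(w,·) = 0` whenever `w ∈ R̃²` satisfies `ℓ(j w) = 0`, and
(4') `j(ψ̃(x,y)) = ψ(j x, j y)`. -/
structure IsExtensionOf {F : Type} [Field F] {R : GradedFAlg F}
    (l : R.carrier →ₗ[F] F) (N : ℕ)
    (ψ : R.carrier →ₗ[F] R.carrier →ₗ[F] R.carrier) {d : ℤ} (D : Deformation F R d)
    (ψt : D.alg.carrier →ₗ[F] D.alg.carrier →ₗ[F] D.alg.carrier) : Prop where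
  deg : ∀ (i j : ℤ) (x y : D.alg.carrier), x ∈ D.alg.grading i → y ∈ D.alg.grading j →
    ψt x y ∈ D.alg.grading (i + j - 2 * (N : ℤ))
  symm : ∀ (i j : ℤ) (x y : D.alg.carrier), x ∈ D.alg.grading i → y ∈ D.alg.grading j →
    ψt x y = ((-1 : F) ^ (i * j)) • ψt y x
  assoc : ∀ x y z : D.alg.carrier,
    x * ψt y z - ψt (x * y) z + ψt x (y * z) - ψt x y * z = 0
  one : ∀ x : D.alg.carrier, ψt 1 x = 0
  t_zero : ∀ x : D.alg.carrier, ψt D.t x = 0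
  div : ∀ w : D.alg.carrier, w ∈ D.alg.grading 2 → l (D.j.toAlgHom w) = 0 →
    ∀ x : D.alg.carrier, ψt w x = 0
  compat : ∀ x y : D.alg.carrier,
    D.j.toAlgHom (ψt x y) = ψ (D.j.toAlgHom x) (D.j.toAlgHom y)

/-! The pair of extensions gives a bilinear map `ψ̃_Δ(z, w) = (ψ̃₁(z₁, w₁), ψ̃₂(z₂, w₂))` on `Δ`,
which lands in `Δ` by (4') and satisfies (1') componentwise. With `τ = (t₁, -t₂)` we have
`ψ̃_Δ(τ, ·) = 0` by (2') and `ψ̃_Δ(·, τ) = 0` by (2') and graded symmetry, so the cocycle identity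
gives `ψ̃_Δ(τu, v) = τ ψ̃_Δ(u, v)` and `ψ̃_Δ(u, τv) = ψ̃_Δ(uτ, v)`. Hence `π ∘ ψ̃_Δ` vanishes as
soon as one argument lies in `ker π = τΔ`, and descends to a bilinear map on `R̃ = Δ/τΔ`.
Properties (1')–(4') pass to the quotient; for the graded ones, homogeneous elements of `R̃` lift
to pairs of homogeneous elements of `Δ` of the same degree, because `j₁, j₂` and `π` respect
the gradings. -/

open DirectSum

lemma GradedFAlg.Hom.map_proj {A B : GradedFAlg F} (f : GradedFAlg.Hom A B) (i : ℤ)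
    (x : A.carrier) :
    f.toAlgHom (GradedAlgebra.proj A.grading i x) =
      GradedAlgebra.proj B.grading i (f.toAlgHom x) := by
  induction x using DirectSum.Decomposition.inductionOn A.grading with
  | zero => simp
  | @homogeneous k x =>
    have hfx := f.graded k x x.2
    by_cases hki : k = i
    · subst hki
      simp only [GradedAlgebra.proj_apply, decompose_of_mem_same _ x.2, decompose_of_mem_same _ hfx]
    · simp only [GradedAlgebra.proj_apply, decompose_of_mem_ne _ x.2 hki,
        decompose_of_mem_ne _ hfx hki, map_zero]
  | add x y hx hy => simp only [map_add, hx, hy]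

lemma GradedFAlg.sum_proj_of_subset (A : GradedFAlg F) (x : A.carrier) {S : Finset ℤ}
    (hS : ∀ i, GradedAlgebra.proj A.grading i x ≠ 0 → i ∈ S) :
    ∑ i ∈ S, GradedAlgebra.proj A.grading i x = x := by
  classical
  have hsupp : (decompose A.grading x).support ⊆ S := fun i hi =>
    hS i ((GradedAlgebra.mem_support_iff A.grading x i).mp hi)
  rw [← Finset.sum_subset hsupp fun i _ hi => ?_]
  · exact sum_support_decompose A.grading x
  · simpa [GradedAlgebra.mem_support_iff A.grading] using hi

section Cocycle

variable {S A : Type*} [CommSemiring S] [Ring A] [Module S A] {ψ : A →ₗ[S] A →ₗ[S] A}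

lemma cocycle_mul_left_of_left_null
    (hψ : ∀ x y z : A, x * ψ y z - ψ (x * y) z + ψ x (y * z) - ψ x y * z = 0)
    {s : A} (hs : ∀ y, ψ s y = 0) (u v : A) : ψ (s * u) v = s * ψ u v := by
  have h := hψ s u v
  rw [hs, hs, zero_mul, sub_zero, add_zero, sub_eq_zero] at h
  exact h.symm

lemma cocycle_mul_right_of_null
    (hψ : ∀ x y z : A, x * ψ y z - ψ (x * y) z + ψ x (y * z) - ψ x y * z = 0)
    {s : A} (hsl : ∀ y, ψ s y = 0) (hsr : ∀ x, ψ x s = 0) (x y : A) :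
    ψ x (s * y) = ψ (x * s) y := by
  have h := hψ x s y
  rw [hsl, hsr, mul_zero, zero_mul, sub_zero, zero_sub, neg_add_eq_zero] at h
  exact h.symm

end Cocycle

section SumPsi

variable {R : GradedFAlg F} {l : R.carrier →ₗ[F] F} {N : ℕ}
  {ψ : R.carrier →ₗ[F] R.carrier →ₗ[F] R.carrier} {d : ℤ}

lemma IsExtensionOf.apply_t_eq_zero {D : Deformation F R d}
    {ψt : D.alg.carrier →ₗ[F] D.alg.carrier →ₗ[F] D.alg.carrier}
    (h : IsExtensionOf l N ψ D ψt) (x : D.alg.carrier) : ψt x D.t = 0 := by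
  induction x using DirectSum.Decomposition.inductionOn D.alg.grading with
  | zero => simp
  | @homogeneous i x => rw [h.symm i d x D.t x.2 D.t_mem, h.t_zero, smul_zero]
  | add x y hx hy => rw [map_add, LinearMap.add_apply, hx, hy, add_zero]

variable {D1 D2 : Deformation F R d}

lemma mem_sumSubalg {z : D1.alg.carrier × D2.alg.carrier} :
    z ∈ sumSubalg D1 D2 ↔ D1.j.toAlgHom z.1 = D2.j.toAlgHom z.2 := Iff.rfl

variable {ψt1 : D1.alg.carrier →ₗ[F] D1.alg.carrier →ₗ[F] D1.alg.carrier}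
  {ψt2 : D2.alg.carrier →ₗ[F] D2.alg.carrier →ₗ[F] D2.alg.carrier}

def sumPsi (h1 : IsExtensionOf l N ψ D1 ψt1) (h2 : IsExtensionOf l N ψ D2 ψt2) :
    sumSubalg D1 D2 →ₗ[F] sumSubalg D1 D2 →ₗ[F] sumSubalg D1 D2 :=
  LinearMap.mk₂ F
    (fun z w => ⟨(ψt1 z.1.1 w.1.1, ψt2 z.1.2 w.1.2), mem_sumSubalg.mpr <| by
      rw [h1.compat, h2.compat, mem_sumSubalg.mp z.2, mem_sumSubalg.mp w.2]⟩)
    (fun _ _ _ => by ext <;> simp) (fun _ _ _ => by ext <;> simp)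
    (fun _ _ _ => by ext <;> simp) (fun _ _ _ => by ext <;> simp)

variable (h1 : IsExtensionOf l N ψ D1 ψt1) (h2 : IsExtensionOf l N ψ D2 ψt2)

@[simp]
lemma sumPsi_fst (z w : sumSubalg D1 D2) : (sumPsi h1 h2 z w).1.1 = ψt1 z.1.1 w.1.1 := rfl

@[simp]
lemma sumPsi_snd (z w : sumSubalg D1 D2) : (sumPsi h1 h2 z w).1.2 = ψt2 z.1.2 w.1.2 := rfl

lemma sumPsi_cocycle (x y z : sumSubalg D1 D2) :
    x * sumPsi h1 h2 y z - sumPsi h1 h2 (x * y) z + sumPsi h1 h2 x (y * z)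
      - sumPsi h1 h2 x y * z = 0 := by
  ext
  · exact h1.assoc x.1.1 y.1.1 z.1.1
  · exact h2.assoc x.1.2 y.1.2 z.1.2

lemma sumPsi_one_left (w : sumSubalg D1 D2) : sumPsi h1 h2 1 w = 0 := by
  ext
  · exact h1.one w.1.1
  · exact h2.one w.1.2

lemma sumPsi_sumT1_left (w : sumSubalg D1 D2) : sumPsi h1 h2 (sumT1 D1 D2) w = 0 := by
  ext
  · exact h1.t_zero w.1.1
  · change ψt2 0 w.1.2 = 0
    rw [map_zero, LinearMap.zero_apply]

lemma sumPsi_sumTT_left (w : sumSubalg D1 D2) : sumPsi h1 h2 (sumTT D1 D2) w = 0 := by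
  ext
  · exact h1.t_zero w.1.1
  · change ψt2 (-D2.t) w.1.2 = 0
    rw [map_neg, LinearMap.neg_apply, h2.t_zero, neg_zero]

lemma sumPsi_sumTT_right (z : sumSubalg D1 D2) : sumPsi h1 h2 z (sumTT D1 D2) = 0 := by
  ext
  · exact h1.apply_t_eq_zero z.1.1
  · change ψt2 z.1.2 (-D2.t) = 0
    rw [map_neg, h2.apply_t_eq_zero, neg_zero]

lemma sumPsi_symm {i k : ℤ} {z w : sumSubalg D1 D2}
    (hz1 : z.1.1 ∈ D1.alg.grading i) (hz2 : z.1.2 ∈ D2.alg.grading i)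
    (hw1 : w.1.1 ∈ D1.alg.grading k) (hw2 : w.1.2 ∈ D2.alg.grading k) :
    sumPsi h1 h2 z w = ((-1 : F) ^ (i * k)) • sumPsi h1 h2 w z := by
  ext
  · exact h1.symm i k _ _ hz1 hw1
  · exact h2.symm i k _ _ hz2 hw2

end SumPsi

section Component

variable {R : GradedFAlg F} {d : ℤ} {D1 D2 : Deformation F R d}

def sumSubalgComponent (z : sumSubalg D1 D2) (i : ℤ) : sumSubalg D1 D2 :=
  ⟨(GradedAlgebra.proj D1.alg.grading i z.1.1, GradedAlgebra.proj D2.alg.grading i z.1.2),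
    mem_sumSubalg.mpr <| by rw [D1.j.map_proj, D2.j.map_proj, mem_sumSubalg.mp z.2]⟩

lemma sumSubalgComponent_fst_mem (z : sumSubalg D1 D2) (i : ℤ) :
    (sumSubalgComponent z i).1.1 ∈ D1.alg.grading i := SetLike.coe_mem _

lemma sumSubalgComponent_snd_mem (z : sumSubalg D1 D2) (i : ℤ) :
    (sumSubalgComponent z i).1.2 ∈ D2.alg.grading i := SetLike.coe_mem _

lemma sum_sumSubalgComponent (z : sumSubalg D1 D2) {S : Finset ℤ}
    (hS1 : ∀ i, GradedAlgebra.proj D1.alg.grading i z.1.1 ≠ 0 → i ∈ S)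
    (hS2 : ∀ i, GradedAlgebra.proj D2.alg.grading i z.1.2 ≠ 0 → i ∈ S) :
    ∑ i ∈ S, sumSubalgComponent z i = z := by
  ext
  · simpa [Prod.fst_sum, sumSubalgComponent] using D1.alg.sum_proj_of_subset z.1.1 hS1
  · simpa [Prod.snd_sum, sumSubalgComponent] using D2.alg.sum_proj_of_subset z.1.2 hS2

end Component

namespace IsSumOf

variable {R : GradedFAlg F} {d : ℤ} {D1 D2 D : Deformation F R d} (hs : IsSumOf D1 D2 D)

/-- The map `π : Δ → R̃` exhibiting `R̃` as the quotient `Δ/(t₁, -t₂)Δ`. -/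
noncomputable def quotMap : sumSubalg D1 D2 →ₐ[F] D.alg.carrier := hs.choose

lemma quotMap_surjective : Function.Surjective hs.quotMap := hs.choose_spec.1

lemma quotMap_mem {i : ℤ} {z : sumSubalg D1 D2} (h1 : z.1.1 ∈ D1.alg.grading i)
    (h2 : z.1.2 ∈ D2.alg.grading i) : hs.quotMap z ∈ D.alg.grading i :=
  hs.choose_spec.2.1 i z h1 h2

lemma quotMap_sumT1 : hs.quotMap (sumT1 D1 D2) = D.t := hs.choose_spec.2.2.1

lemma quotMap_eq_zero_iff (z : sumSubalg D1 D2) :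
    hs.quotMap z = 0 ↔ ∃ w, z = sumTT D1 D2 * w :=
  hs.choose_spec.2.2.2.2.1 z

lemma j_quotMap (z : sumSubalg D1 D2) : D.j.toAlgHom (hs.quotMap z) = D1.j.toAlgHom z.1.1 :=
  hs.choose_spec.2.2.2.2.2 z

lemma quotMap_sumTT : hs.quotMap (sumTT D1 D2) = 0 :=
  (hs.quotMap_eq_zero_iff _).mpr ⟨1, (mul_one _).symm⟩

lemma quotMap_sumSubalgComponent (z : sumSubalg D1 D2) (i : ℤ) :
    hs.quotMap (sumSubalgComponent z i) = GradedAlgebra.proj D.alg.grading i (hs.quotMap z) := by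
  classical
  let S := insert i ((decompose D1.alg.grading z.1.1).support ∪
    (decompose D2.alg.grading z.1.2).support)
  have hz : ∑ k ∈ S, sumSubalgComponent z k = z := sum_sumSubalgComponent z
    (fun k hk => Finset.mem_insert_of_mem <| Finset.mem_union_left _ <|
      (GradedAlgebra.mem_support_iff _ _ _).mpr hk)
    (fun k hk => Finset.mem_insert_of_mem <| Finset.mem_union_right _ <|
      (GradedAlgebra.mem_support_iff _ _ _).mpr hk)
  have hmem (k : ℤ) : hs.quotMap (sumSubalgComponent z k) ∈ D.alg.grading k :=
    hs.quotMap_mem (sumSubalgComponent_fst_mem z k) (sumSubalgComponent_snd_mem z k)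
  conv_rhs => rw [← hz]
  rw [map_sum, map_sum, Finset.sum_eq_single_of_mem i (Finset.mem_insert_self _ _)
    fun k _ hki => by rw [GradedAlgebra.proj_apply, decompose_of_mem_ne _ (hmem k) hki]]
  rw [GradedAlgebra.proj_apply, decompose_of_mem_same _ (hmem i)]

lemma exists_homogeneous_lift {i : ℤ} {x : D.alg.carrier} (hx : x ∈ D.alg.grading i) :
    ∃ z : sumSubalg D1 D2, z.1.1 ∈ D1.alg.grading i ∧ z.1.2 ∈ D2.alg.grading i ∧
      hs.quotMap z = x := by
  obtain ⟨z, rfl⟩ := hs.quotMap_surjective x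
  refine ⟨sumSubalgComponent z i, sumSubalgComponent_fst_mem z i,
    sumSubalgComponent_snd_mem z i, ?_⟩
  rw [hs.quotMap_sumSubalgComponent, GradedAlgebra.proj_apply, decompose_of_mem_same _ hx]

section Extension

variable {l : R.carrier →ₗ[F] F} {N : ℕ} {ψ : R.carrier →ₗ[F] R.carrier →ₗ[F] R.carrier}
  {ψt1 : D1.alg.carrier →ₗ[F] D1.alg.carrier →ₗ[F] D1.alg.carrier}
  {ψt2 : D2.alg.carrier →ₗ[F] D2.alg.carrier →ₗ[F] D2.alg.carrier}
  (h1 : IsExtensionOf l N ψ D1 ψt1) (h2 : IsExtensionOf l N ψ D2 ψt2)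

lemma quotMap_sumPsi_of_left {z : sumSubalg D1 D2} (hz : hs.quotMap z = 0)
    (w : sumSubalg D1 D2) : hs.quotMap (sumPsi h1 h2 z w) = 0 := by
  obtain ⟨u, rfl⟩ := (hs.quotMap_eq_zero_iff z).mp hz
  rw [cocycle_mul_left_of_left_null (sumPsi_cocycle h1 h2) (sumPsi_sumTT_left h1 h2), map_mul,
    hs.quotMap_sumTT, zero_mul]

lemma quotMap_sumPsi_of_right {w : sumSubalg D1 D2} (hw : hs.quotMap w = 0)
    (z : sumSubalg D1 D2) : hs.quotMap (sumPsi h1 h2 z w) = 0 := by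
  obtain ⟨v, rfl⟩ := (hs.quotMap_eq_zero_iff w).mp hw
  rw [cocycle_mul_right_of_null (sumPsi_cocycle h1 h2) (sumPsi_sumTT_left h1 h2)
    (sumPsi_sumTT_right h1 h2)]
  exact hs.quotMap_sumPsi_of_left h1 h2 (by rw [map_mul, hs.quotMap_sumTT, mul_zero]) v

lemma quotMap_sumPsi_congr {z z' w w' : sumSubalg D1 D2} (hz : hs.quotMap z = hs.quotMap z')
    (hw : hs.quotMap w = hs.quotMap w') :
    hs.quotMap (sumPsi h1 h2 z w) = hs.quotMap (sumPsi h1 h2 z' w') := by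
  have hsplit : sumPsi h1 h2 z w - sumPsi h1 h2 z' w'
      = sumPsi h1 h2 (z - z') w + sumPsi h1 h2 z' (w - w') := by
    rw [map_sub, map_sub, LinearMap.sub_apply]; abel
  rw [← sub_eq_zero, ← map_sub, hsplit, map_add,
    hs.quotMap_sumPsi_of_left h1 h2 (by rw [map_sub, hz, sub_self]),
    hs.quotMap_sumPsi_of_right h1 h2 (by rw [map_sub, hw, sub_self]), add_zero]

noncomputable def linearSection : D.alg.carrier →ₗ[F] sumSubalg D1 D2 :=
  (LinearMap.exists_rightInverse_of_surjective hs.quotMap.toLinearMap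
    (LinearMap.range_eq_top.mpr hs.quotMap_surjective)).choose

lemma quotMap_linearSection (x : D.alg.carrier) : hs.quotMap (hs.linearSection x) = x :=
  LinearMap.congr_fun (LinearMap.exists_rightInverse_of_surjective hs.quotMap.toLinearMap
    (LinearMap.range_eq_top.mpr hs.quotMap_surjective)).choose_spec x

noncomputable def extension : D.alg.carrier →ₗ[F] D.alg.carrier →ₗ[F] D.alg.carrier :=
  ((sumPsi h1 h2).compl₁₂ hs.linearSection hs.linearSection).compr₂ hs.quotMap.toLinearMap

lemma extension_quotMap (z w : sumSubalg D1 D2) :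
    hs.extension h1 h2 (hs.quotMap z) (hs.quotMap w) = hs.quotMap (sumPsi h1 h2 z w) :=
  hs.quotMap_sumPsi_congr h1 h2 (hs.quotMap_linearSection _) (hs.quotMap_linearSection _)

theorem isExtensionOf_extension : IsExtensionOf l N ψ D (hs.extension h1 h2) where
  deg i k x y hx hy := by
    obtain ⟨z, hz1, hz2, rfl⟩ := hs.exists_homogeneous_lift hx
    obtain ⟨w, hw1, hw2, rfl⟩ := hs.exists_homogeneous_lift hy
    rw [extension_quotMap]
    exact hs.quotMap_mem (h1.deg i k _ _ hz1 hw1) (h2.deg i k _ _ hz2 hw2)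
  symm i k x y hx hy := by
    obtain ⟨z, hz1, hz2, rfl⟩ := hs.exists_homogeneous_lift hx
    obtain ⟨w, hw1, hw2, rfl⟩ := hs.exists_homogeneous_lift hy
    rw [extension_quotMap, extension_quotMap, sumPsi_symm h1 h2 hz1 hz2 hw1 hw2, map_smul]
  assoc x y z := by
    obtain ⟨x, rfl⟩ := hs.quotMap_surjective x
    obtain ⟨y, rfl⟩ := hs.quotMap_surjective y
    obtain ⟨z, rfl⟩ := hs.quotMap_surjective z
    simp only [← map_mul, extension_quotMap, ← map_sub, ← map_add, sumPsi_cocycle, map_zero]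
  one x := by
    obtain ⟨x, rfl⟩ := hs.quotMap_surjective x
    rw [← map_one hs.quotMap, extension_quotMap, sumPsi_one_left, map_zero]
  t_zero x := by
    obtain ⟨x, rfl⟩ := hs.quotMap_surjective x
    rw [← hs.quotMap_sumT1, extension_quotMap, sumPsi_sumT1_left, map_zero]
  div w hw hl x := by
    obtain ⟨z, hz1, hz2, rfl⟩ := hs.exists_homogeneous_lift hw
    obtain ⟨x, rfl⟩ := hs.quotMap_surjective x
    rw [hs.j_quotMap] at hl
    have hzero : sumPsi h1 h2 z x = 0 := by
      ext
      · exact h1.div _ hz1 hl _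
      · exact h2.div _ hz2 (by rwa [← mem_sumSubalg.mp z.2]) _
    rw [extension_quotMap, hzero, map_zero]
  compat x y := by
    obtain ⟨x, rfl⟩ := hs.quotMap_surjective x
    obtain ⟨y, rfl⟩ := hs.quotMap_surjective y
    rw [extension_quotMap, hs.j_quotMap, hs.j_quotMap, hs.j_quotMap, sumPsi_fst, h1.compat]

end Extension

end IsSumOf

theorem extension_closed_under_sum_general
    {F : Type} [Field F] (R : GradedFAlg F) (l : R.carrier →ₗ[F] F) (N : ℕ)
    (ψ : R.carrier →ₗ[F] R.carrier →ₗ[F] R.carrier)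
    (d : ℤ) (D1 D2 D : Deformation F R d)
    (h1 : ∃ ψt1, IsExtensionOf l N ψ D1 ψt1)
    (h2 : ∃ ψt2, IsExtensionOf l N ψ D2 ψt2)
    (hsum : IsSumOf D1 D2 D) :
    ∃ ψt, IsExtensionOf l N ψ D ψt := by
  obtain ⟨ψt1, h1⟩ := h1
  obtain ⟨ψt2, h2⟩ := h2
  exact ⟨hsum.extension h1 h2, hsum.isExtensionOf_extension h1 h2⟩

/-- Let `R` be a graded `F`-algebra, `ℓ` a linear functional,
`N > 0`, and `ψ` a graded symmetric bilinear map of degree `−2N` satisfying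
properties (1), (2), (3). If two `d`-dimensional deformations of `R` each admit
an extension of `ψ`, then so does their sum; hence `Def_d(R, ψ) ⊆ Def_d(R)` is
closed under the sum of deformations. -/
theorem extension_closed_under_sum
    {F : Type} [Field F] (R : GradedFAlg F) (l : R.carrier →ₗ[F] F) (N : ℕ) (hN : 0 < N)
    (ψ : R.carrier →ₗ[F] R.carrier →ₗ[F] R.carrier)
    (hdeg : ∀ (i j : ℤ) (x y : R.carrier), x ∈ R.grading i → y ∈ R.grading j →
      ψ x y ∈ R.grading (i + j - 2 * (N : ℤ)))
    (hsymm : ∀ (i j : ℤ) (x y : R.carrier), x ∈ R.grading i → y ∈ R.grading j →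
      ψ x y = ((-1 : F) ^ (i * j)) • ψ y x)
    (hassoc : ∀ x y z : R.carrier, x * ψ y z - ψ (x * y) z + ψ x (y * z) - ψ x y * z = 0)
    (hone : ∀ x : R.carrier, ψ 1 x = 0)
    (hdiv : ∀ w : R.carrier, w ∈ R.grading 2 → l w = 0 → ∀ x : R.carrier, ψ w x = 0)
    (d : ℤ) (hd : 0 < d) (D1 D2 D : Deformation F R d)
    (h1 : ∃ ψt1, IsExtensionOf l N ψ D1 ψt1)
    (h2 : ∃ ψt2, IsExtensionOf l N ψ D2 ψt2)
    (hsum : IsSumOf D1 D2 D) :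
    ∃ ψt, IsExtensionOf l N ψ D ψt :=
  extension_closed_under_sum_general R l N ψ d D1 D2 D h1 h2 hsum
end
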